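/- arXiv:math/0608270 — 3 statements merged into one kernel-verified Lean document; each statement's English description precedes it below -/
import Mathlib

section
/- If a voting system C on a set A of at least three alternatives satisfies unanimity and independence of irrelevant alternatives, then C satisfies monotonicity: given profiles P, P' with {i : a ≽_i b} ⊆ {i : a ≽'_i b} and {i : b ≽_i a} ⊇ {i : b ≽'_i a}, if a ≽ b in C(P) then a ≽' b in C(P'). -/
/-! Choose a third alternative `c`. In a profile `M` where every voter ranks `a` against both `b`
and `c` as they rank `a` against `b` in `P`, and is indifferent between `b` and `c`, IIA and
unanimity give `a ≽ b ≽ c`, so `a ≽ c`. In a second profile `R` every voter ranks `a` against `c`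
as in `M`, ranks `c` weakly above `b`, and ranks `a` against `b` as in `P'`; the two inclusions of the
hypothesis are exactly what makes `R` transitive. IIA and unanimity give `a ≽ c ≽ b` in `C R`,
and IIA carries `a ≽ b` over to `C P'`. -/

variable {A I : Type*}

/-- A partial preorder: a reflexive and transitive binary relation. -/
def IsPPO (P : A → A → Prop) : Prop := Reflexive P ∧ Transitive P

/-- A linear (total) preorder: reflexive, transitive and complete. -/
def IsLPO (P : A → A → Prop) : Prop := Reflexive P ∧ Transitive P ∧ ∀ a b, P a b ∨ P b a

/-- A profile of partial preorders. -/
def IsPPOProfile (P : I → A → A → Prop) : Prop := ∀ i, IsPPO (P i)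

/-- A profile of linear (total) preorders. -/
def IsLPOProfile (P : I → A → A → Prop) : Prop := ∀ i, IsLPO (P i)

/-- Strict preference. -/
def StrictPref (P : A → A → Prop) (a b : A) : Prop := P a b ∧ ¬ P b a

/-- Indifference. -/
def Indiff (P : A → A → Prop) (a b : A) : Prop := P a b ∧ P b a

/-- The set `A` contains at least three distinct alternatives. -/
def ThreeAlts (A : Type*) : Prop := ∃ a b c : A, a ≠ b ∧ b ≠ c ∧ a ≠ c

/-- Unanimity. -/
def Unanimity (C : (I → A → A → Prop) → A → A → Prop) : Prop :=
  ∀ P, IsPPOProfile P → ∀ a b : A, (∀ i, P i a b) → C P a b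

/-- Independence of irrelevant alternatives. -/
def IIA (C : (I → A → A → Prop) → A → A → Prop) : Prop :=
  ∀ P P' : I → A → A → Prop, IsPPOProfile P → IsPPOProfile P' → ∀ a b : A,
    {i | P i a b} = {i | P' i a b} → {i | P i b a} = {i | P' i b a} →
    (C P a b ↔ C P' a b)

/-- Neutrality: `C (ρ*P) = ρ*(C P)` for every permutation `ρ` of the alternatives. -/
def Neutrality (C : (I → A → A → Prop) → A → A → Prop) : Prop :=
  ∀ (ρ : Equiv.Perm A) (P : I → A → A → Prop), IsPPOProfile P →
    ∀ x y : A, C (fun i a b => P i (ρ.symm a) (ρ.symm b)) x y ↔ C P (ρ.symm x) (ρ.symm y)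

/-- Monotonicity. -/
def Monotonicity (C : (I → A → A → Prop) → A → A → Prop) : Prop :=
  ∀ P P' : I → A → A → Prop, IsPPOProfile P → IsPPOProfile P' → ∀ a b : A,
    {i | P i a b} ⊆ {i | P' i a b} → {i | P' i b a} ⊆ {i | P i b a} →
    C P a b → C P' a b

/-- `J` is a decisive set: unanimous strict preference on `J` forces weak aggregate preference. -/
def Decisive (C : (I → A → A → Prop) → A → A → Prop) (J : Set I) : Prop :=
  ∀ P, IsPPOProfile P → ∀ a b : A, (∀ j ∈ J, StrictPref (P j) a b) → C P a b

/-- `J` is a strongly decisive set: unanimous weak preference on `J` forces weak aggregate preference. -/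
def SDecisive (C : (I → A → A → Prop) → A → A → Prop) (J : Set I) : Prop :=
  ∀ P, IsPPOProfile P → ∀ a b : A, (∀ j ∈ J, P j a b) → C P a b

lemma ThreeAlts.exists_ne_ne (hA : ThreeAlts A) (a b : A) : ∃ c, c ≠ a ∧ c ≠ b := by
  obtain ⟨x, y, z, hxy, hyz, hxz⟩ := hA
  by_contra! h
  have h' : ∀ c, c = a ∨ c = b := fun c => or_iff_not_imp_left.2 (h c)
  have := h' x; have := h' y; have := h' z
  grind

def tripleProfile (a b c : A) (ab ba ac ca bc cb : Set I) : I → A → A → Prop :=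
  fun i x y => x = y ∨ (x = a ∧ y = b ∧ i ∈ ab) ∨ (x = b ∧ y = a ∧ i ∈ ba) ∨
    (x = a ∧ y = c ∧ i ∈ ac) ∨ (x = c ∧ y = a ∧ i ∈ ca) ∨
    (x = b ∧ y = c ∧ i ∈ bc) ∨ (x = c ∧ y = b ∧ i ∈ cb)

lemma isPPOProfile_tripleProfile {a b c : A} {ab ba ac ca bc cb : Set I}
    (habc : ab ∩ bc ⊆ ac) (hacb : ac ∩ cb ⊆ ab) (hbac : ba ∩ ac ⊆ bc)
    (hbca : bc ∩ ca ⊆ ba) (hcab : ca ∩ ab ⊆ cb) (hcba : cb ∩ ba ⊆ ca) :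
    IsPPOProfile (tripleProfile a b c ab ba ac ca bc cb) := by
  refine fun i => ⟨fun x => Or.inl rfl, fun x y z hxy hyz => ?_⟩
  simp only [tripleProfile] at *
  rcases hxy with rfl | hxy
  · exact hyz
  rcases hyz with rfl | hyz
  · exact Or.inr hxy
  rcases hxy with ⟨rfl, rfl, _⟩ | ⟨rfl, rfl, _⟩ | ⟨rfl, rfl, _⟩ | ⟨rfl, rfl, _⟩ | ⟨rfl, rfl, _⟩ |
      ⟨rfl, rfl, _⟩ <;>
    rcases hyz with ⟨_, rfl, _⟩ | ⟨_, rfl, _⟩ | ⟨_, rfl, _⟩ | ⟨_, rfl, _⟩ | ⟨_, rfl, _⟩ |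
      ⟨_, rfl, _⟩ <;>
    grind

lemma setOf_tripleProfile {a b c : A} (hab : a ≠ b) (hac : a ≠ c) (hbc : b ≠ c)
    (ab ba ac ca bc cb : Set I) :
    {i | tripleProfile a b c ab ba ac ca bc cb i a b} = ab ∧
    {i | tripleProfile a b c ab ba ac ca bc cb i b a} = ba ∧
    {i | tripleProfile a b c ab ba ac ca bc cb i a c} = ac ∧
    {i | tripleProfile a b c ab ba ac ca bc cb i c a} = ca ∧
    {i | tripleProfile a b c ab ba ac ca bc cb i b c} = bc ∧
    {i | tripleProfile a b c ab ba ac ca bc cb i c b} = cb := by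
  simp [tripleProfile, hab, hac, hbc, hab.symm, hac.symm, hbc.symm]

lemma pref_of_iia_of_unanimous {C : (I → A → A → Prop) → A → A → Prop}
    (hC : ∀ P, IsPPOProfile P → IsPPO (C P)) (hU : Unanimity C) (hIIA : IIA C)
    {P Q : I → A → A → Prop} (hP : IsPPOProfile P) (hQ : IsPPOProfile Q) {a x y : A}
    (hax : C P a x) (h_ax : {i | P i a x} = {i | Q i a x})
    (h_xa : {i | P i x a} = {i | Q i x a}) (hxy : ∀ i, Q i x y) : C Q a y :=
  (hC Q hQ).2 ((hIIA P Q hP hQ a x h_ax h_xa).1 hax) (hU Q hQ x y hxy)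

theorem arrovian_monotonicity (C : (I → A → A → Prop) → A → A → Prop)
    (hA : ThreeAlts A)
    (hC : ∀ P, IsPPOProfile P → IsPPO (C P))
    (hU : Unanimity C) (hIIA : IIA C) :
    Monotonicity C := by
  intro P P' hP hP' a b hS hT hab
  rcases eq_or_ne a b with rfl | hne
  · exact (hC P' hP').1 a
  obtain ⟨c, hca, hcb⟩ := hA.exists_ne_ne a b
  set S := {i | P i a b}
  set T := {i | P i b a}
  set S' := {i | P' i a b}
  set T' := {i | P' i b a}
  set M := tripleProfile a b c S T S T .univ .univ
  set R := tripleProfile a b c S' T' S T (T' ∩ S) .univ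
  have hM : IsPPOProfile M :=
    isPPOProfile_tripleProfile (by simp) (by simp) (by simp) (by simp) (by simp) (by simp)
  have hR : IsPPOProfile R :=
    isPPOProfile_tripleProfile (fun _ hi => hi.2.2) (by rwa [Set.inter_univ]) subset_rfl
      (fun _ hi => hi.1.1) (by simp) (by rwa [Set.univ_inter])
  obtain ⟨hM_ab, hM_ba, hM_ac, hM_ca, hM_bc, -⟩ :=
    setOf_tripleProfile hne hca.symm hcb.symm S T S T .univ .univ
  obtain ⟨hR_ab, hR_ba, hR_ac, hR_ca, -, hR_cb⟩ :=
    setOf_tripleProfile hne hca.symm hcb.symm S' T' S T (T' ∩ S) .univ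
  have hMac : C M a c := pref_of_iia_of_unanimous hC hU hIIA hP hM hab hM_ab.symm hM_ba.symm
    fun i => hM_bc.ge (Set.mem_univ i)
  have hRab : C R a b := pref_of_iia_of_unanimous hC hU hIIA hM hR hMac
    (hM_ac.trans hR_ac.symm) (hM_ca.trans hR_ca.symm) fun i => hR_cb.ge (Set.mem_univ i)
  exact (hIIA R P' hR hP' a b hR_ab hR_ba).1 hRab
end

section
/- Let C be an arrovian voting system on at least three alternatives and J ⊆ I a strongly decisive set. Then the following are equivalent: (1) J is minimal among strongly decisive sets; (2) J is contained in every strongly decisive set; (3) every j ∈ J has influence: for every profile, if a ≽_i b for all i ∈ J and a ≻_j b, then a ≻ b in the aggregate. -/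
variable {A I : Type*}

/-!
Strong decisiveness spreads from a single pair of alternatives to all pairs (the field-expansion
argument of Arrow's theorem, run through three-alternative profiles and IIA). If some `j` in a
strongly decisive `J` had no influence, so that `C P` ranks `b` weakly above `a` although `J`
weakly and `j` strictly prefers `a` to `b`, then gluing `P` on `{a, b}` to an arbitrary profile on
`{b, c}` and letting `J` rank `a` above `c` shows that `J \ {j}` is strongly decisive on `(b, c)`,
hence strongly decisive, contradicting minimality. Conversely an influential `j` lies in every
strongly decisive `J'`: otherwise the profile in which only `j` separates `a` from `b` has
`C` rank `b` weakly above `a` because of `J'`, and strictly below it because of `j`.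
-/

/-- The reflexive relation on `A` which, on three alternatives `a, b, c`, relates `x` to `y`
exactly when the corresponding proposition `pxy` holds. -/
def tripleRel (a b c : A) (pab pba pbc pcb pac pca : Prop) : A → A → Prop :=
  fun x y => x = y ∨ (x = a ∧ y = b ∧ pab) ∨ (x = b ∧ y = a ∧ pba) ∨
    (x = b ∧ y = c ∧ pbc) ∨ (x = c ∧ y = b ∧ pcb) ∨
    (x = a ∧ y = c ∧ pac) ∨ (x = c ∧ y = a ∧ pca)

section tripleRel

variable {a b c : A} {pab pba pbc pcb pac pca : Prop}

theorem isPPO_tripleRel (hab : a ≠ b) (hbc : b ≠ c) (hac : a ≠ c)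
    (hab_bc : pab → pbc → pac) (hac_cb : pac → pcb → pab) (hba_ac : pba → pac → pbc)
    (hbc_ca : pbc → pca → pba) (hca_ab : pca → pab → pcb) (hcb_ba : pcb → pba → pca) :
    IsPPO (tripleRel a b c pab pba pbc pcb pac pca) := by
  refine ⟨fun x => Or.inl rfl, fun x y z hxy hyz => ?_⟩
  unfold tripleRel at *
  rcases hxy with hxy | ⟨rfl, rfl, hxy⟩ | ⟨rfl, rfl, hxy⟩ | ⟨rfl, rfl, hxy⟩ |
      ⟨rfl, rfl, hxy⟩ | ⟨rfl, rfl, hxy⟩ | ⟨rfl, rfl, hxy⟩ <;>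
    rcases hyz with hyz | ⟨h, rfl, hyz⟩ | ⟨h, rfl, hyz⟩ | ⟨h, rfl, hyz⟩ |
      ⟨h, rfl, hyz⟩ | ⟨h, rfl, hyz⟩ | ⟨h, rfl, hyz⟩ <;>
    subst_vars <;> simp_all

theorem tripleRel_ab (hab : a ≠ b) (hbc : b ≠ c) (hac : a ≠ c) :
    tripleRel a b c pab pba pbc pcb pac pca a b ↔ pab := by
  grind [tripleRel]

theorem tripleRel_ba (hab : a ≠ b) (hbc : b ≠ c) (hac : a ≠ c) :
    tripleRel a b c pab pba pbc pcb pac pca b a ↔ pba := by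
  grind [tripleRel]

theorem tripleRel_bc (hab : a ≠ b) (hbc : b ≠ c) (hac : a ≠ c) :
    tripleRel a b c pab pba pbc pcb pac pca b c ↔ pbc := by
  grind [tripleRel]

theorem tripleRel_cb (hab : a ≠ b) (hbc : b ≠ c) (hac : a ≠ c) :
    tripleRel a b c pab pba pbc pcb pac pca c b ↔ pcb := by
  grind [tripleRel]

theorem tripleRel_ac (hab : a ≠ b) (hbc : b ≠ c) (hac : a ≠ c) :
    tripleRel a b c pab pba pbc pcb pac pca a c ↔ pac := by
  grind [tripleRel]

theorem tripleRel_ca (hab : a ≠ b) (hbc : b ≠ c) (hac : a ≠ c) :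
    tripleRel a b c pab pba pbc pcb pac pca c a ↔ pca := by
  grind [tripleRel]

end tripleRel

theorem ThreeAlts.exists_ne_ne_s8 (hA : ThreeAlts A) (u v : A) : ∃ w, w ≠ u ∧ w ≠ v := by
  obtain ⟨a, b, c, hab, hbc, hac⟩ := hA
  by_cases hau : a = u
  · subst hau
    by_cases hbv : b = v
    · exact ⟨c, hac.symm, hbv ▸ hbc.symm⟩
    · exact ⟨b, hab.symm, hbv⟩
  by_cases hav : a = v
  · subst hav
    by_cases hbu : b = u
    · exact ⟨c, hbu ▸ hbc.symm, hac.symm⟩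
    · exact ⟨b, hbu, hab.symm⟩
  · exact ⟨a, hau, hav⟩

theorem IIA.iff_of_iff {C : (I → A → A → Prop) → A → A → Prop} (hIIA : IIA C)
    {P Q : I → A → A → Prop} (hP : IsPPOProfile P) (hQ : IsPPOProfile Q) {a b : A}
    (hab : ∀ i, P i a b ↔ Q i a b) (hba : ∀ i, P i b a ↔ Q i b a) : C P a b ↔ C Q a b :=
  hIIA P Q hP hQ a b (Set.ext hab) (Set.ext hba)

def SDecisiveAt (C : (I → A → A → Prop) → A → A → Prop) (K : Set I) (x y : A) : Prop :=
  ∀ Q, IsPPOProfile Q → (∀ i ∈ K, Q i x y) → C Q x y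

def HasInfluence (C : (I → A → A → Prop) → A → A → Prop) (J : Set I) (j : I) : Prop :=
  ∀ P : I → A → A → Prop, IsPPOProfile P →
    ∀ a b : A, (∀ i ∈ J, P i a b) → StrictPref (P j) a b → StrictPref (C P) a b

section FieldExpansion

variable {C : (I → A → A → Prop) → A → A → Prop} {K : Set I}

theorem SDecisiveAt.move_snd (hC : ∀ P, IsPPOProfile P → IsPPO (C P)) (hU : Unanimity C)
    (hIIA : IIA C) {x y v : A} (hxy : x ≠ y) (hvx : v ≠ x) (hvy : v ≠ y)
    (h : SDecisiveAt C K x y) : SDecisiveAt C K x v := by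
  intro Q hQ hK
  set R : I → A → A → Prop := fun i =>
    tripleRel x y v (i ∈ K) (Q i v x) True (Q i v x ∧ i ∈ K) (Q i x v) (Q i v x)
  have hR : IsPPOProfile R := fun i =>
    isPPO_tripleRel hxy hvy.symm hvx.symm (fun hi _ => hK i hi) (fun _ h => h.2)
      (fun _ _ => trivial) (fun _ h => h) (fun h hi => ⟨h, hi⟩) (fun h _ => h.1)
  have hRxy : C R x y := h R hR fun i hi => (tripleRel_ab hxy hvy.symm hvx.symm).2 hi
  have hRyv : C R y v := hU R hR y v fun i => (tripleRel_bc hxy hvy.symm hvx.symm).2 trivial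
  exact (hIIA.iff_of_iff hR hQ (fun i => tripleRel_ac hxy hvy.symm hvx.symm)
    (fun i => tripleRel_ca hxy hvy.symm hvx.symm)).1 ((hC R hR).2 hRxy hRyv)

theorem SDecisiveAt.move_fst (hC : ∀ P, IsPPOProfile P → IsPPO (C P)) (hU : Unanimity C)
    (hIIA : IIA C) {x y u : A} (hxy : x ≠ y) (hux : u ≠ x) (huy : u ≠ y)
    (h : SDecisiveAt C K x y) : SDecisiveAt C K u y := by
  intro Q hQ hK
  set R : I → A → A → Prop := fun i =>
    tripleRel u x y True (i ∈ K ∧ Q i y u) (i ∈ K) (Q i y u) (Q i u y) (Q i y u)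
  have hR : IsPPOProfile R := fun i =>
    isPPO_tripleRel hux hxy huy (fun _ hi => hK i hi) (fun _ _ => trivial) (fun h _ => h.1)
      (fun hi h => ⟨hi, h⟩) (fun h _ => h) (fun _ h => h.2)
  have hRux : C R u x := hU R hR u x fun i => (tripleRel_ab hux hxy huy).2 trivial
  have hRxy : C R x y := h R hR fun i hi => (tripleRel_bc hux hxy huy).2 hi
  exact (hIIA.iff_of_iff hR hQ (fun i => tripleRel_ac hux hxy huy)
    (fun i => tripleRel_ca hux hxy huy)).1 ((hC R hR).2 hRux hRxy)

theorem SDecisiveAt.exists_sdecisiveAt_fst (hA : ThreeAlts A)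
    (hC : ∀ P, IsPPOProfile P → IsPPO (C P)) (hU : Unanimity C) (hIIA : IIA C) {b c : A}
    (hbc : b ≠ c) (h : SDecisiveAt C K b c) (u : A) : ∃ w ≠ u, SDecisiveAt C K u w := by
  obtain rfl | hub := eq_or_ne u b
  · exact ⟨c, hbc.symm, h⟩
  obtain rfl | huc := eq_or_ne u c
  · obtain ⟨w, hwb, hwu⟩ := hA.exists_ne_ne_s8 b u
    exact ⟨w, hwu, (h.move_snd hC hU hIIA hbc hwb hwu).move_fst hC hU hIIA hwb.symm hub hwu.symm⟩
  · exact ⟨c, huc.symm, h.move_fst hC hU hIIA hbc hub huc⟩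

theorem SDecisiveAt.sdecisive (hA : ThreeAlts A) (hC : ∀ P, IsPPOProfile P → IsPPO (C P))
    (hU : Unanimity C) (hIIA : IIA C) {b c : A} (hbc : b ≠ c) (h : SDecisiveAt C K b c) :
    SDecisive C K := by
  intro Q hQ u v hK
  obtain rfl | huv := eq_or_ne u v
  · exact (hC Q hQ).1 u
  obtain ⟨w, hwu, huw⟩ := h.exists_sdecisiveAt_fst hA hC hU hIIA hbc u
  obtain rfl | hvw := eq_or_ne v w
  · exact huw Q hQ hK
  · exact huw.move_snd hC hU hIIA hwu.symm huv.symm hvw Q hQ hK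

end FieldExpansion

section Influence

variable {C : (I → A → A → Prop) → A → A → Prop} {J : Set I} {j : I}

theorem SDecisive.sdecisiveAt_diff_singleton (hC : ∀ P, IsPPOProfile P → IsPPO (C P))
    (hIIA : IIA C) (hJ : SDecisive C J) {P : I → A → A → Prop} (hP : IsPPOProfile P)
    {a b c : A} (hab : a ≠ b) (hbc : b ≠ c) (hac : a ≠ c) (hJab : ∀ i ∈ J, P i a b)
    (hjba : ¬ P j b a) (hba : C P b a) : SDecisiveAt C (J \ {j}) b c := by
  intro Q hQ hK
  set R : I → A → A → Prop := fun i =>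
    tripleRel a b c (P i a b) (P i b a) (Q i b c) (Q i c b)
      (i ∈ J ∨ (P i a b ∧ Q i b c)) (Q i c b ∧ P i b a)
  -- `b ≽ a ≽ c ⇒ b ≽ c` holds for `i ∈ J \ {j}` by `hK`, and vacuously for `j` as `¬ P j b a`.
  have hR : IsPPOProfile R := fun i =>
    isPPO_tripleRel hab hbc hac (fun hiab hibc => Or.inr ⟨hiab, hibc⟩)
      (fun h _ => h.elim (hJab i) And.left)
      (fun hiba h => h.elim (fun hi => hK i ⟨hi, fun hij => hjba (hij ▸ hiba)⟩) And.right)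
      (fun _ h => h.2) (fun h _ => h.1) (fun hicb hiba => ⟨hicb, hiba⟩)
  have hRba : C R b a := (hIIA.iff_of_iff hP hR (fun i => (tripleRel_ba hab hbc hac).symm)
    (fun i => (tripleRel_ab hab hbc hac).symm)).1 hba
  have hRac : C R a c := hJ R hR a c fun i hi => (tripleRel_ac hab hbc hac).2 (Or.inl hi)
  exact (hIIA.iff_of_iff hR hQ (fun i => tripleRel_bc hab hbc hac)
    (fun i => tripleRel_cb hab hbc hac)).1 ((hC R hR).2 hRba hRac)

theorem hasInfluence_of_minimal (hA : ThreeAlts A) (hC : ∀ P, IsPPOProfile P → IsPPO (C P))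
    (hU : Unanimity C) (hIIA : IIA C) (hJ : SDecisive C J)
    (hmin : ∀ J' : Set I, J' ⊆ J → SDecisive C J' → J' = J) (hj : j ∈ J) :
    HasInfluence C J j := by
  intro P hP a b hJab hjab
  refine ⟨hJ P hP a b hJab, fun hba => ?_⟩
  have hab : a ≠ b := by rintro rfl; exact hjab.2 ((hP j).1 a)
  obtain ⟨c, hca, hcb⟩ := hA.exists_ne_ne_s8 a b
  have hdiff : SDecisive C (J \ {j}) :=
    (hJ.sdecisiveAt_diff_singleton hC hIIA hP hab hcb.symm hca.symm hJab hjab.2 hba).sdecisive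
      hA hC hU hIIA hcb.symm
  rw [← hmin _ Set.sdiff_subset hdiff] at hj
  exact hj.2 rfl

theorem HasInfluence.mem_of_sdecisive {a b : A} (hab : a ≠ b) (hj : HasInfluence C J j)
    {J' : Set I} (hJ' : SDecisive C J') : j ∈ J' := by
  by_contra hjJ'
  set P : I → A → A → Prop := fun i x y => x = y ∨ (x = a ∧ y = b) ∨ (x = b ∧ y = a ∧ i ≠ j)
  have hP : IsPPOProfile P := by
    refine fun i => ⟨fun x => Or.inl rfl, fun x y z hxy hyz => ?_⟩
    rcases hxy with rfl | ⟨rfl, rfl⟩ | ⟨rfl, rfl, hi⟩ <;>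
      rcases hyz with rfl | ⟨h, rfl⟩ | ⟨h, rfl, hi'⟩ <;> simp_all [P]
  have hPab : ∀ i, P i a b := fun i => Or.inr (Or.inl ⟨rfl, rfl⟩)
  have hjab : StrictPref (P j) a b := ⟨hPab j, by simp [P, hab, hab.symm]⟩
  have hJ'ba : C P b a := hJ' P hP b a fun i hi =>
    Or.inr (Or.inr ⟨rfl, rfl, fun hij => hjJ' (hij ▸ hi)⟩)
  exact (hj P hP a b (fun i _ => hPab i) hjab).2 hJ'ba

end Influence

theorem minimal_strongly_decisive_tfae_general (C : (I → A → A → Prop) → A → A → Prop)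
    (hA : ThreeAlts A)
    (hC : ∀ P, IsPPOProfile P → IsPPO (C P))
    (hU : Unanimity C) (hIIA : IIA C)
    (J : Set I) (hJ : SDecisive C J) :
    List.TFAE
      [ ∀ J' : Set I, J' ⊆ J → SDecisive C J' → J' = J,
        ∀ J' : Set I, SDecisive C J' → J ⊆ J',
        ∀ j ∈ J, ∀ P : I → A → A → Prop, IsPPOProfile P →
          ∀ a b : A, (∀ i ∈ J, P i a b) → StrictPref (P j) a b → StrictPref (C P) a b ] := by
  have ⟨a, b, _, hab, _⟩ := hA
  tfae_have 1 → 3 := fun hmin j hj => hasInfluence_of_minimal hA hC hU hIIA hJ hmin hj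
  tfae_have 3 → 2 := fun hinf J' hJ' j hj => HasInfluence.mem_of_sdecisive hab (hinf j hj) hJ'
  tfae_have 2 → 1 := fun hmin J' hsub hJ' => hsub.antisymm (hmin J' hJ')
  tfae_finish

theorem minimal_strongly_decisive_tfae [Fintype I] (C : (I → A → A → Prop) → A → A → Prop)
    (hA : ThreeAlts A)
    (hC : ∀ P, IsPPOProfile P → IsPPO (C P))
    (hU : Unanimity C) (hIIA : IIA C)
    (J : Set I) (hJ : SDecisive C J) :
    List.TFAE
      [ ∀ J' : Set I, J' ⊆ J → SDecisive C J' → J' = J,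
        ∀ J' : Set I, SDecisive C J' → J ⊆ J',
        ∀ j ∈ J, ∀ P : I → A → A → Prop, IsPPOProfile P →
          ∀ a b : A, (∀ i ∈ J, P i a b) → StrictPref (P j) a b → StrictPref (C P) a b ] :=
  minimal_strongly_decisive_tfae_general C hA hC hU hIIA J hJ
end

section
/- The only arrovian voting systems on at least three alternatives that satisfy anonymity are the trivial voting system C_∅ (declaring all alternatives equivalent) and the strong Pareto rule C_I(P_1,...,P_n) = ⋂_{i∈I} P_i. Only C_I satisfies both anonymity and strong unanimity. -/
variable {A I : Type*}

/-- Anonymity: all individuals are treated symmetrically. -/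
def Anonymity (C : (I → A → A → Prop) → A → A → Prop) : Prop :=
  ∀ (σ : Equiv.Perm I) (P : I → A → A → Prop), IsPPOProfile P →
    ∀ a b : A, C (fun i => P (σ i)) a b ↔ C P a b

/-- Strong unanimity. -/
def StrongUnanimity (C : (I → A → A → Prop) → A → A → Prop) : Prop :=
  (∀ P, IsPPOProfile P → ∀ a b : A, (∀ i, P i a b) → C P a b) ∧
  (∀ P, IsPPOProfile P → ∀ a b : A, (∀ i, P i a b) →
    (∃ j, StrictPref (P j) a b) → StrictPref (C P) a b)

/-!
Say that voter sets `(U, V)` force `x ≽ y` if every profile in which exactly `U` weakly prefers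
`x` to `y` and exactly `V` weakly prefers `y` to `x` is aggregated with `x ≽ y`; by IIA any
instance `C P x y` yields such a configuration. Evaluating `C` on suitable profiles over three
alternatives and using transitivity of the aggregate, forcing spreads from one pair of
alternatives to every other (with `U` enlarged and `V` shrunk), and the forcing sets `U` of a
fixed pair are closed under intersection. Anonymity closes them under permutations of the
voters. So if `C P x y` holds although some voter `j` does not weakly prefer `x` to `y`, then
intersecting the images of that forcing set under the transpositions `(i j)` shows that `∅`
forces some pair, and one more composition shows that `(∅, I)` does: `C` declares all
alternatives equivalent. Otherwise `C` is the strong Pareto rule, by unanimity. Strong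
unanimity excludes the trivial rule as soon as there is a voter.
-/

lemma ThreeAlts.exists_ne_ne_s11 (hA : ThreeAlts A) (x y : A) : ∃ z, z ≠ x ∧ z ≠ y := by
  obtain ⟨a, b, c, hab, hbc, hac⟩ := hA
  by_contra! h
  rcases eq_or_ne a x with rfl | hax
  · exact hbc ((h b hab.symm).trans (h c hac.symm).symm)
  rcases eq_or_ne b x with rfl | hbx
  · exact hac ((h a hab).trans (h c hbc.symm).symm)
  · exact hab ((h a hax).trans (h b hbx).symm)

lemma empty_mem_of_perm_invariant [Finite I] {S : Set (Set I)}
    (huniv : Set.univ ∈ S) (hinter : ∀ U ∈ S, ∀ V ∈ S, U ∩ V ∈ S)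
    (hperm : ∀ σ : Equiv.Perm I, ∀ U ∈ S, σ ⁻¹' U ∈ S) {U : Set I} (hU : U ∈ S) {j : I}
    (hj : j ∉ U) : ∅ ∈ S := by
  classical
  have := Fintype.ofFinite I
  have hempty : Finset.univ.inf (fun i => Equiv.swap i j ⁻¹' U) = ∅ := by
    refine Set.eq_empty_of_forall_notMem fun i hi => hj ?_
    simpa using Finset.inf_le (f := fun i => Equiv.swap i j ⁻¹' U) (Finset.mem_univ i) hi
  rw [← hempty]
  exact Finset.inf_induction huniv hinter fun i _ => hperm _ U hU

def threeAltProfile (x y z : A) (Sxy Syx Syz Szy Sxz Szx : Set I) : I → A → A → Prop :=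
  fun i u v => u = v ∨ (u = x ∧ v = y ∧ i ∈ Sxy) ∨ (u = y ∧ v = x ∧ i ∈ Syx)
    ∨ (u = y ∧ v = z ∧ i ∈ Syz) ∨ (u = z ∧ v = y ∧ i ∈ Szy)
    ∨ (u = x ∧ v = z ∧ i ∈ Sxz) ∨ (u = z ∧ v = x ∧ i ∈ Szx)

section ThreeAltProfile

variable {x y z : A} {Sxy Syx Syz Szy Sxz Szx : Set I}

lemma isPPOProfile_threeAltProfile (hxyz : Sxy ∩ Syz ⊆ Sxz) (hxzy : Sxz ∩ Szy ⊆ Sxy) (hyxz : Syx ∩ Sxz ⊆ Syz)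
    (hyzx : Syz ∩ Szx ⊆ Syx) (hzyx : Szy ∩ Syx ⊆ Szx) (hzxy : Szx ∩ Sxy ⊆ Szy) :
    IsPPOProfile (threeAltProfile x y z Sxy Syx Syz Szy Sxz Szx) := by
  refine fun i => ⟨fun u => Or.inl rfl, ?_⟩
  rintro u v w h1 h2
  rcases h1 with rfl | ⟨rfl, rfl, h⟩ | ⟨rfl, rfl, h⟩ | ⟨rfl, rfl, h⟩ | ⟨rfl, rfl, h⟩ |
    ⟨rfl, rfl, h⟩ | ⟨rfl, rfl, h⟩
  · exact h2
  all_goals rcases h2 with rfl | ⟨e, rfl, h'⟩ | ⟨e, rfl, h'⟩ | ⟨e, rfl, h'⟩ |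
    ⟨e, rfl, h'⟩ | ⟨e, rfl, h'⟩ | ⟨e, rfl, h'⟩
  all_goals simp_all [threeAltProfile]
  all_goals aesop

lemma setOf_threeAltProfile (hxy : x ≠ y) (hyz : y ≠ z) (hxz : x ≠ z) :
    {i | threeAltProfile x y z Sxy Syx Syz Szy Sxz Szx i x y} = Sxy ∧
    {i | threeAltProfile x y z Sxy Syx Syz Szy Sxz Szx i y x} = Syx ∧
    {i | threeAltProfile x y z Sxy Syx Syz Szy Sxz Szx i y z} = Syz ∧
    {i | threeAltProfile x y z Sxy Syx Syz Szy Sxz Szx i z y} = Szy ∧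
    {i | threeAltProfile x y z Sxy Syx Syz Szy Sxz Szx i x z} = Sxz ∧
    {i | threeAltProfile x y z Sxy Syx Syz Szy Sxz Szx i z x} = Szx := by
  refine ⟨?_, ?_, ?_, ?_, ?_, ?_⟩ <;>
  · ext i
    simp [threeAltProfile, hxy, hyz, hxz, hxy.symm, hyz.symm, hxz.symm]

end ThreeAltProfile

structure IsArrovian (C : (I → A → A → Prop) → A → A → Prop) : Prop where
  isPPO : ∀ P, IsPPOProfile P → IsPPO (C P)
  unanimity : Unanimity C
  iia : IIA C

def Forces (C : (I → A → A → Prop) → A → A → Prop) (x y : A) (U V : Set I) : Prop :=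
  ∀ P, IsPPOProfile P → {i | P i x y} = U → {i | P i y x} = V → C P x y

section Forces

variable {C : (I → A → A → Prop) → A → A → Prop}

lemma forces_of_apply (hIIA : IIA C) {P : I → A → A → Prop} (hP : IsPPOProfile P) {x y : A}
    (h : C P x y) : Forces C x y {i | P i x y} {i | P i y x} :=
  fun Q hQ hxy hyx => (hIIA Q P hQ hP x y hxy hyx).mpr h

lemma forces_univ (hU : Unanimity C) (x y : A) (V : Set I) : Forces C x y Set.univ V :=
  fun P hP hxy _ => hU P hP x y fun i => Set.eq_univ_iff_forall.mp hxy i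

lemma Forces.perm (hAnon : Anonymity C) {x y : A} {U V : Set I} (h : Forces C x y U V)
    (σ : Equiv.Perm I) : Forces C x y (σ ⁻¹' U) (σ ⁻¹' V) := by
  intro P hP hxy hyx
  have hPσ : IsPPOProfile fun i => P (σ.symm i) := fun i => hP _
  have hPσxy : {i | P (σ.symm i) x y} = U := by
    ext i; simpa using Set.ext_iff.mp hxy (σ.symm i)
  have hPσyx : {i | P (σ.symm i) y x} = V := by
    ext i; simpa using Set.ext_iff.mp hyx (σ.symm i)
  simpa using (hAnon σ _ hPσ x y).mpr (h _ hPσ hPσxy hPσyx)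

/-- The six inclusions make `threeAltProfile` a profile of preorders; on it `C x y` and `C y z`
give `C x z`, which IIA transfers to every profile with the same sets on `(x, z)`. -/
lemma Forces.trans (hC : ∀ P, IsPPOProfile P → IsPPO (C P)) (hIIA : IIA C) {x y z : A}
    (hxy : x ≠ y) (hyz : y ≠ z) (hxz : x ≠ z) {Sxy Syx Syz Szy Sxz Szx : Set I}
    (hxyz : Sxy ∩ Syz ⊆ Sxz) (hxzy : Sxz ∩ Szy ⊆ Sxy) (hyxz : Syx ∩ Sxz ⊆ Syz)
    (hyzx : Syz ∩ Szx ⊆ Syx) (hzyx : Szy ∩ Syx ⊆ Szx) (hzxy : Szx ∩ Sxy ⊆ Szy)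
    (h₁ : Forces C x y Sxy Syx) (h₂ : Forces C y z Syz Szy) : Forces C x z Sxz Szx := by
  have hR : IsPPOProfile (threeAltProfile x y z Sxy Syx Syz Szy Sxz Szx) :=
    isPPOProfile_threeAltProfile hxyz hxzy hyxz hyzx hzyx hzxy
  obtain ⟨e₁, e₂, e₃, e₄, e₅, e₆⟩ := setOf_threeAltProfile (I := I) (Sxy := Sxy) (Syx := Syx)
    (Syz := Syz) (Szy := Szy) (Sxz := Sxz) (Szx := Szx) hxy hyz hxz
  intro Q hQ hxz hzx
  exact (hIIA Q _ hQ hR x z (hxz.trans e₅.symm) (hzx.trans e₆.symm)).mpr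
    ((hC _ hR).2 (h₁ _ hR e₁ e₂) (h₂ _ hR e₃ e₄))

lemma Forces.replace_right (hC : IsArrovian C) {x y z : A} (hxy : x ≠ y) (hyz : y ≠ z)
    (hxz : x ≠ z) {U V U' V' : Set I} (hU : U ⊆ U') (hV : V' ⊆ V) (h : Forces C x y U V) :
    Forces C x z U' V' :=
  h.trans hC.isPPO hC.iia hxy hyz hxz (fun _ hi => hU hi.1) (fun _ hi => hi.2.1)
    (fun i _ => Set.mem_univ i) (fun _ hi => hV hi.2) (fun _ hi => hi.1.2)
    (fun _ hi => Set.mem_inter hi.2 hi.1) (forces_univ hC.unanimity y z (U ∩ V'))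

lemma Forces.replace_left (hC : IsArrovian C) {x y z : A} (hxy : x ≠ y) (hyz : y ≠ z)
    (hxz : x ≠ z) {U V U' V' : Set I} (hU : U ⊆ U') (hV : V' ⊆ V) (h : Forces C y z U V) :
    Forces C x z U' V' :=
  (forces_univ hC.unanimity x y (U ∩ V')).trans hC.isPPO hC.iia hxy hyz hxz
    (fun _ hi => hU hi.2) (fun i _ => Set.mem_univ i) (fun _ hi => hi.1.1) (fun _ hi => hi)
    (fun _ hi => hi.2.2) (fun _ hi => hV hi.1) h

/-- For `z = y` (mere monotonicity in `U` and `V`) the proof detours through a third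
alternative. -/
lemma Forces.move_right (hC : IsArrovian C) (hA : ThreeAlts A) {x y z : A} (hxy : x ≠ y)
    (hxz : x ≠ z) {U V U' V' : Set I} (hU : U ⊆ U') (hV : V' ⊆ V) (h : Forces C x y U V) :
    Forces C x z U' V' := by
  obtain ⟨w, hwx, hwy⟩ := hA.exists_ne_ne_s11 x y
  by_cases hyz : y = z
  · subst hyz
    exact (h.replace_right hC hxy hwy.symm hwx.symm hU hV).replace_right hC hwx.symm hwy hxy
      subset_rfl subset_rfl
  · exact h.replace_right hC hxy hyz hxz hU hV

lemma Forces.move_left (hC : IsArrovian C) (hA : ThreeAlts A) {x y z : A} (hxy : x ≠ y)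
    (hzy : z ≠ y) {U V U' V' : Set I} (hU : U ⊆ U') (hV : V' ⊆ V) (h : Forces C x y U V) :
    Forces C z y U' V' := by
  obtain ⟨w, hwx, hwy⟩ := hA.exists_ne_ne_s11 x y
  by_cases hxz : z = x
  · subst hxz
    exact (h.replace_left hC hwx hxy hwy hU hV).replace_left hC hwx.symm hwy hzy
      subset_rfl subset_rfl
  · exact h.replace_left hC hxz hxy hzy hU hV

lemma Forces.move (hC : IsArrovian C) (hA : ThreeAlts A) {x y x' y' : A} (hxy : x ≠ y)
    (hxy' : x' ≠ y') {U V U' V' : Set I} (hU : U ⊆ U') (hV : V' ⊆ V) (h : Forces C x y U V) :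
    Forces C x' y' U' V' := by
  by_cases hx'y : x' = y
  · subst hx'y
    obtain ⟨w, hwx, hwy⟩ := hA.exists_ne_ne_s11 x x'
    exact ((h.move_right hC hA hxy hwx.symm hU hV).move_left hC hA hwx.symm hwy.symm
      subset_rfl subset_rfl).move_right hC hA hwy.symm hxy' subset_rfl subset_rfl
  · exact (h.move_left hC hA hxy hx'y hU hV).move_right hC hA hx'y hxy' subset_rfl subset_rfl

lemma Forces.inter (hC : IsArrovian C) (hA : ThreeAlts A) {a b : A} (hab : a ≠ b)
    {U₁ V₁ U₂ V₂ : Set I} (h₁ : Forces C a b U₁ V₁) (h₂ : Forces C a b U₂ V₂) :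
    Forces C a b (U₁ ∩ U₂) (V₁ ∩ V₂) := by
  obtain ⟨c, hca, hcb⟩ := hA.exists_ne_ne_s11 a b
  have hbc : Forces C b c U₂ V₂ := h₂.move hC hA hab hcb.symm subset_rfl subset_rfl
  have hac : Forces C a c (U₁ ∩ U₂) (V₁ ∩ V₂) :=
    h₁.trans hC.isPPO hC.iia hab hcb.symm hca.symm subset_rfl (fun _ hi => hi.1.1)
      (fun _ hi => hi.2.2) (fun _ hi => hi.2.1) (fun _ hi => Set.mem_inter hi.2 hi.1)
      (fun _ hi => hi.1.2) hbc
  exact hac.move hC hA hca.symm hab subset_rfl subset_rfl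

lemma Forces.trans_empty (hC : ∀ P, IsPPOProfile P → IsPPO (C P)) (hIIA : IIA C) {a b c : A}
    (hab : a ≠ b) (hbc : b ≠ c) (hac : a ≠ c) {V₁ V₂ : Set I} (h₁ : Forces C a b ∅ V₁)
    (h₂ : Forces C b c ∅ V₂) : Forces C a c ∅ Set.univ :=
  h₁.trans hC hIIA hab hbc hac (fun _ hi => hi.1) (fun _ hi => hi.1) (fun _ hi => hi.2)
    (fun _ hi => absurd hi.1 (Set.notMem_empty _)) (fun i _ => Set.mem_univ i)
    (fun _ hi => absurd hi.2 (Set.notMem_empty _)) h₂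

lemma IsArrovian.forall_of_not_pareto [Finite I] (hC : IsArrovian C) (hA : ThreeAlts A)
    (hAnon : Anonymity C) {P : I → A → A → Prop} (hP : IsPPOProfile P) {x y : A}
    (hxy : C P x y) {j : I} (hj : ¬ P j x y) :
    ∀ Q : I → A → A → Prop, IsPPOProfile Q → ∀ u v : A, C Q u v := by
  have hne : x ≠ y := by
    rintro rfl
    exact hj ((hP j).1 x)
  obtain ⟨a, b, c, hab, hbc, hac⟩ := id hA
  have hempty : ∅ ∈ {U : Set I | ∃ V, Forces C a b U V} :=
    empty_mem_of_perm_invariant ⟨∅, forces_univ hC.unanimity a b ∅⟩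
      (fun _ ⟨_, h₁⟩ _ ⟨_, h₂⟩ => ⟨_, h₁.inter hC hA hab h₂⟩)
      (fun σ _ ⟨_, h⟩ => ⟨_, h.perm hAnon σ⟩)
      ⟨_, (forces_of_apply hC.iia hP hxy).move hC hA hne hab subset_rfl subset_rfl⟩ hj
  obtain ⟨V, hV⟩ := hempty
  have hindiff : Forces C a c ∅ Set.univ :=
    hV.trans_empty hC.isPPO hC.iia hab hbc hac (hV.move hC hA hab hbc subset_rfl subset_rfl)
  intro Q hQ u v
  rcases eq_or_ne u v with rfl | huv
  · exact (hC.isPPO Q hQ).1 u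
  · exact hindiff.move hC hA hac huv (Set.empty_subset _) (Set.subset_univ _) Q hQ rfl rfl

lemma IsArrovian.trivial_or_pareto [Finite I] (hC : IsArrovian C) (hA : ThreeAlts A)
    (hAnon : Anonymity C) :
    (∀ P : I → A → A → Prop, IsPPOProfile P → ∀ a b : A, C P a b) ∨
      (∀ P : I → A → A → Prop, IsPPOProfile P → ∀ a b : A, C P a b ↔ ∀ i, P i a b) := by
  by_cases hex : ∃ P, IsPPOProfile P ∧ ∃ (x y : A) (j : I), C P x y ∧ ¬ P j x y
  · obtain ⟨P, hP, x, y, j, hxy, hj⟩ := hex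
    exact Or.inl (hC.forall_of_not_pareto hA hAnon hP hxy hj)
  · push Not at hex
    exact Or.inr fun P hP a b => ⟨fun h i => hex P hP a b i h, hC.unanimity P hP a b⟩

end Forces

lemma StrongUnanimity.not_forall {C : (I → A → A → Prop) → A → A → Prop}
    (hSU : StrongUnanimity C) {a b : A} (hab : a ≠ b) (j : I) :
    ¬ ∀ P : I → A → A → Prop, IsPPOProfile P → ∀ u v : A, C P u v := by
  intro htriv
  set Q : I → A → A → Prop := fun _ u v => u = v ∨ (u = a ∧ v = b)
  have hQ : IsPPOProfile Q := by
    refine fun _ => ⟨fun u => Or.inl rfl, ?_⟩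
    rintro u v w (rfl | ⟨rfl, rfl⟩) (rfl | ⟨hva, rfl⟩)
    all_goals simp_all [Q]
  have hstrict : StrictPref (C Q) a b :=
    hSU.2 Q hQ a b (fun _ => Or.inr ⟨rfl, rfl⟩) ⟨j, Or.inr ⟨rfl, rfl⟩, by simp [Q, hab.symm]⟩
  exact hstrict.2 (htriv Q hQ b a)

theorem anonymous_arrovian_classification [Fintype I] (C : (I → A → A → Prop) → A → A → Prop)
    (hA : ThreeAlts A)
    (hC : ∀ P, IsPPOProfile P → IsPPO (C P))
    (hU : Unanimity C) (hIIA : IIA C)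
    (hAnon : Anonymity C) :
    ((∀ P : I → A → A → Prop, IsPPOProfile P → ∀ a b : A, C P a b) ∨
      (∀ P : I → A → A → Prop, IsPPOProfile P → ∀ a b : A, C P a b ↔ ∀ i, P i a b)) ∧
    (StrongUnanimity C →
      ∀ P : I → A → A → Prop, IsPPOProfile P → ∀ a b : A, C P a b ↔ ∀ i, P i a b) := by
  have hclass := IsArrovian.trivial_or_pareto ⟨hC, hU, hIIA⟩ hA hAnon
  refine ⟨hclass, fun hSU => hclass.elim (fun htriv P hP a b => ?_) id⟩
  obtain ⟨a₀, b₀, -, hab₀, -, -⟩ := hA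
  exact ⟨fun _ i => (hSU.not_forall hab₀ i htriv).elim, fun _ => htriv P hP a b⟩
end
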